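/- Let A be a bounded self-adjoint operator on a complex Hilbert space H. Then A is nonnegative if and only if for every u ∈ H, the supremum over v ∈ H of |⟪Au, v⟫|²/⟪Av, v⟫ (with the convention that the quotient is 0 when ⟪Av, v⟫ = 0) equals ⟪Au, u⟫. -/

import Mathlib

/-!
For a positive operator `T`, `(x, y) ↦ ⟪T x, y⟫` is a positive semidefinite Hermitian form, so
its Cauchy–Schwarz inequality bounds every quotient `|⟪T u, v⟫|² / ⟪T v, v⟫` by `⟪T u, u⟫`, and
`v = u` attains the bound. Conversely, `v = 0` puts `0` in the set of quotients, so its least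
upper bound `⟪T u, u⟫` is nonnegative.
-/

open scoped InnerProductSpace

open RCLike

namespace LinearMap.IsPositive

variable {𝕜 E : Type*} [RCLike 𝕜] [NormedAddCommGroup E] [InnerProductSpace 𝕜 E]
  {T : E →ₗ[𝕜] E}

abbrev preInnerProductSpaceCore (hT : T.IsPositive) : PreInnerProductSpace.Core 𝕜 E where
  inner x y := ⟪T x, y⟫_𝕜
  conj_inner_symm x y := by rw [inner_conj_symm, hT.isSymmetric]
  re_inner_nonneg := hT.re_inner_nonneg_left
  add_left x y z := by rw [map_add, inner_add_left]
  smul_left x y r := by rw [map_smul, inner_smul_left]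

theorem norm_inner_sq_le (hT : T.IsPositive) (x y : E) :
    ‖⟪T x, y⟫_𝕜‖ ^ 2 ≤ re ⟪T x, x⟫_𝕜 * re ⟪T y, y⟫_𝕜 := by
  have cauchy_schwarz : ‖⟪T x, y⟫_𝕜‖ * ‖⟪T y, x⟫_𝕜‖ ≤ re ⟪T x, x⟫_𝕜 * re ⟪T y, y⟫_𝕜 :=
    @InnerProductSpace.Core.inner_mul_inner_self_le 𝕜 E _ _ _ hT.preInnerProductSpaceCore x y
  rwa [hT.isSymmetric y x, norm_inner_symm y (T x), ← sq] at cauchy_schwarz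

theorem norm_inner_self_eq_re (hT : T.IsPositive) (x : E) :
    ‖⟪T x, x⟫_𝕜‖ = re ⟪T x, x⟫_𝕜 := by
  rw [← hT.isSymmetric.coe_re_inner_apply_self, norm_ofReal, ofReal_re,
    abs_of_nonneg (hT.re_inner_nonneg_left x)]

theorem isGreatest_variational (hT : T.IsPositive) (u : E) :
    IsGreatest
      {r : ℝ | ∃ v : E,
        r = if re ⟪T v, v⟫_𝕜 = 0 then 0 else ‖⟪T u, v⟫_𝕜‖ ^ 2 / re ⟪T v, v⟫_𝕜}
      (re ⟪T u, u⟫_𝕜) := by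
  refine ⟨⟨u, ?_⟩, ?_⟩
  · split_ifs with hu
    · exact hu
    · rw [hT.norm_inner_self_eq_re, sq, mul_div_cancel_right₀ _ hu]
  · rintro r ⟨v, rfl⟩
    split_ifs with hv
    · exact hT.re_inner_nonneg_left u
    · rw [div_le_iff₀ ((hT.re_inner_nonneg_left v).lt_of_ne' hv)]
      exact hT.norm_inner_sq_le u v

end LinearMap.IsPositive

theorem variational_principle_iff_nonneg
    {H : Type*} [NormedAddCommGroup H] [InnerProductSpace ℂ H] [CompleteSpace H]
    (A : H →L[ℂ] H) (hA : IsSelfAdjoint A) :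
    (∀ v : H, 0 ≤ (⟪A v, v⟫_ℂ).re) ↔
      (∀ u : H,
        IsLUB
          {r : ℝ | ∃ v : H,
            r = if (⟪A v, v⟫_ℂ).re = 0 then 0
                else ‖⟪A u, v⟫_ℂ‖ ^ 2 / (⟪A v, v⟫_ℂ).re}
          ((⟪A u, u⟫_ℂ).re)) := by
  constructor
  · intro hpos u
    exact (LinearMap.IsPositive.isGreatest_variational ⟨hA.isSymmetric, hpos⟩ u).isLUB
  · intro hlub v
    exact (hlub v).1 ⟨0, by simp⟩
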